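/- arXiv:1709.00474 — 4 statements merged into one kernel-verified Lean document; each statement's English description precedes it below -/
import Mathlib

section
/- Let G be a finite simple graph that is not complete, let G be chordal, let n be its order, d the largest cardinality of a clique in G, and κ its vertex connectivity. Then for every i = 1, …, κ+1 one has b_i = Σ_{Y ⊆ V(G), |Y| = i−1} (W(G−Y) − 1) + 1, where the sum ranges over all subsets Y of V(G) of cardinality i−1. -/
open Finset

/-- `G` is chordal: every cycle of length at least 4 has a chord, i.e. an edge
joining two non-consecutive vertices of the cycle. -/
def IsChordal {V : Type*} (G : SimpleGraph V) : Prop :=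
  ∀ (n : ℕ), 4 ≤ n → ∀ f : ZMod n → V, Function.Injective f →
    (∀ i : ZMod n, G.Adj (f i) (f (i + 1))) →
    ∃ i j : ZMod n, i ≠ j ∧ i + 1 ≠ j ∧ j + 1 ≠ i ∧ G.Adj (f i) (f j)

/-- The number of cliques of `G` with exactly `i` vertices. -/
noncomputable def cliqueCount {V : Type*} [Fintype V] (G : SimpleGraph V) (i : ℕ) : ℕ :=
  {s : Finset V | G.IsNClique i s}.ncard

/-- `W(G - Y)`: the number of connected components of the subgraph of `G` induced on the
complement of `Y`. -/
noncomputable def numComponents {V : Type*} [Fintype V] [DecidableEq V] (G : SimpleGraph V)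
    (Y : Finset V) : ℕ :=
  Nat.card (G.induce (↑(Yᶜ) : Set V)).ConnectedComponent

/-- A vertex-cut of `G`: a set of vertices whose removal disconnects `G`. -/
def IsVertexCut {V : Type*} [Fintype V] [DecidableEq V] (G : SimpleGraph V) (Y : Finset V) :
    Prop :=
  ¬ (G.induce (↑(Yᶜ) : Set V)).Connected

/-- The vertex connectivity `κ(G)`: the minimum cardinality of a vertex-cut. -/
noncomputable def vertexConnectivity {V : Type*} [Fintype V] [DecidableEq V]
    (G : SimpleGraph V) : ℕ :=
  sInf {k | ∃ Y : Finset V, IsVertexCut G Y ∧ Y.card = k}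

/-- `s` is a maximal clique of `G`. -/
def IsMaxCliqueOf {V : Type*} (G : SimpleGraph V) (s : Finset V) : Prop :=
  G.IsClique (↑s : Set V) ∧ ∀ t : Finset V, G.IsClique (↑t : Set V) → s ⊆ t → s = t

/-- A dominating `i`-clique of `G`: a set of `i`-cliques such that every maximal clique of
order at least `i` contains some member of the set. -/
def IsDominatingCliqueSet {V : Type*} (G : SimpleGraph V) (i : ℕ)
    (D : Finset (Finset V)) : Prop :=
  (∀ s ∈ D, G.IsNClique i s) ∧
    ∀ t : Finset V, IsMaxCliqueOf G t → i ≤ t.card → ∃ s ∈ D, s ⊆ t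

/-- `d_i(G)`: the minimum cardinality of a dominating `i`-clique of `G`. -/
noncomputable def domNum {V : Type*} (G : SimpleGraph V) (i : ℕ) : ℕ :=
  sInf {k | ∃ D : Finset (Finset V), IsDominatingCliqueSet G i D ∧ D.card = k}

/-- `κ̃(G)`: the maximum cardinality of the intersection of a pair of distinct maximal
cliques of `G`. -/
noncomputable def kappaTilde {V : Type*} [DecidableEq V] (G : SimpleGraph V) : ℕ :=
  sSup {k | ∃ C C' : Finset V, IsMaxCliqueOf G C ∧ IsMaxCliqueOf G C' ∧ C ≠ C' ∧
    (C ∩ C').card = k}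

/-- `G` restricted to the vertex set `s` is a threshold graph: it can be built from a
one-vertex graph by repeatedly adding either an isolated vertex or a vertex adjacent to
all existing vertices. -/
inductive IsThresholdOn {V : Type*} [DecidableEq V] (G : SimpleGraph V) : Finset V → Prop
  | single (v : V) : IsThresholdOn G {v}
  | isolated (s : Finset V) (v : V) (hv : v ∉ s) (hs : IsThresholdOn G s)
      (hiso : ∀ u ∈ s, ¬ G.Adj v u) : IsThresholdOn G (insert v s)
  | dominating (s : Finset V) (v : V) (hv : v ∉ s) (hs : IsThresholdOn G s)
      (hdom : ∀ u ∈ s, G.Adj v u) : IsThresholdOn G (insert v s)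

/-- `G` is a threshold graph. -/
def IsThreshold {V : Type*} [Fintype V] [DecidableEq V] (G : SimpleGraph V) : Prop :=
  IsThresholdOn G Finset.univ

/-- `|C_i(G)|`: the number of maximal cliques of `G` with exactly `i` vertices. -/
noncomputable def maxCliqueCount {V : Type*} [Fintype V] (G : SimpleGraph V) (i : ℕ) : ℕ :=
  {s : Finset V | IsMaxCliqueOf G s ∧ s.card = i}.ncard

/-- `s` is a maximal clique of `G` among the cliques contained in `W`, i.e. a facet of the
restriction of the clique complex of `G` to `W`. -/
def IsMaxCliqueWithin {V : Type*} (G : SimpleGraph V) (W : Finset V) (s : Finset V) : Prop :=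
  s ⊆ W ∧ G.IsClique (↑s : Set V) ∧
    ∀ t : Finset V, t ⊆ W → G.IsClique (↑t : Set V) → s ⊆ t → s = t

/-- The restriction of the clique complex of `G` to `W` is pure: all its facets have the
same cardinality. -/
def PureOn {V : Type*} (G : SimpleGraph V) (W : Finset V) : Prop :=
  ∀ s t : Finset V, IsMaxCliqueWithin G W s → IsMaxCliqueWithin G W t → s.card = t.card

/-!
In a chordal graph a minimal separator `S` of two non-adjacent vertices is a clique: two
non-adjacent vertices of `S` have neighbours on both sides, and chordless paths through the two
sides would close up to a chordless cycle of length at least four. By induction every vertex set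
then has a simplicial vertex (Dirac), which yields a perfect elimination order `r`: the earlier
neighbours `N⁻(v)` of every vertex form a clique.

Every clique is `{v} ∪ t` for its `r`-last vertex `v` and some `t ⊆ N⁻(v)`, so
`∑ cᵢ xⁱ⁻¹ = ∑ᵥ (x + 1) ^ |N⁻(v)|` and `bᵢ` counts the vertices with `|N⁻(v)| = i - 1`.

On a shortest path the `r`-largest vertex is an endpoint (an interior one would have adjacent
path neighbours), so every component of `G - Y` contains exactly one vertex `v ∉ Y` with
`N⁻(v) ⊆ Y`, namely its `r`-least vertex. Apart from the `r`-least vertex outside `Y`, such a `v`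
has an earlier non-neighbour, so `N⁻(v)` is a vertex cut and `κ ≤ |N⁻(v)| ≤ |Y|`; for
`|Y| = i - 1 ≤ κ` this forces `N⁻(v) = Y`. Summing over `Y` thus counts the vertices with
`|N⁻(v)| = i - 1`, except the unique one adjacent to all earlier vertices.
-/

lemma eq_of_forall_sum_range_mul_pow_eq {R : Type*} [CommRing R] [IsDomain R] [Infinite R]
    {d : ℕ} {a a' : ℕ → R}
    (h : ∀ y : R, ∑ t ∈ range d, a t * y ^ t = ∑ t ∈ range d, a' t * y ^ t) {t : ℕ}
    (ht : t < d) : a t = a' t := by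
  have hcoeff : ∀ c : ℕ → R, (∑ s ∈ range d, Polynomial.C (c s) * Polynomial.X ^ s).coeff t =
      c t := fun c => by
    simp [Polynomial.finsetSum_coeff, ht]
  have hP : ∑ s ∈ range d, Polynomial.C (a s) * Polynomial.X ^ s =
      ∑ s ∈ range d, Polynomial.C (a' s) * Polynomial.X ^ s :=
    Polynomial.funext fun y => by simpa [Polynomial.eval_finsetSum] using h y
  rw [← hcoeff a, hP, hcoeff]

lemma add_one_pow_eq_sum_range {R : Type*} [CommSemiring R] (x : R) {m d : ℕ} (hm : m < d) :
    (x + 1) ^ m = ∑ t ∈ range d, (m.choose t : R) * x ^ t := by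
  have hzero : ∑ t ∈ Ico (m + 1) d, (m.choose t : R) * x ^ t = 0 :=
    sum_eq_zero fun t ht => by
      rw [Nat.choose_eq_zero_of_lt (by simp at ht; omega), Nat.cast_zero, zero_mul]
  rw [add_pow, ← sum_range_add_sum_Ico _ (show m + 1 ≤ d by omega), hzero, add_zero]
  exact sum_congr rfl fun t _ => by rw [one_pow, mul_one, mul_comm]

lemma sum_Icc_one_eq_sum_range {M : Type*} [AddCommMonoid M] (f : ℕ → M) (d : ℕ) :
    ∑ i ∈ Icc 1 d, f i = ∑ t ∈ range d, f (t + 1) := by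
  rw [range_eq_Ico, sum_Ico_add' f 0 d 1, zero_add]
  rfl

lemma Function.Injective.injective_card_filter_lt {α : Type*} [Fintype α] {r : α → ℕ}
    (hr : Function.Injective r) : Function.Injective fun v => #{u | r u < r v} := by
  have hlt : ∀ v w, r v < r w → #{u | r u < r v} < #{u | r u < r w} := fun v w h =>
    card_lt_card ((ssubset_iff_of_subset fun u hu => by simp at hu ⊢; omega).2
      ⟨v, by simp [h], by simp⟩)
  intro v w hvw
  rcases lt_trichotomy (r v) (r w) with h | h | h
  · exact absurd hvw (hlt v w h).ne
  · exact hr h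
  · exact absurd hvw (hlt w v h).ne'

lemma Function.Injective.exists_card_filter_lt_eq {α : Type*} [Fintype α] {r : α → ℕ}
    (hr : Function.Injective r) {k : ℕ} (hk : k < Fintype.card α) :
    ∃ v, #{u | r u < r v} = k := by
  let pos : α → Fin (Fintype.card α) := fun v =>
    ⟨#{u | r u < r v}, card_lt_univ_of_notMem (x := v) (by simp)⟩
  have hbij : Function.Bijective pos := (Fintype.bijective_iff_injective_and_card pos).2
    ⟨fun v w h => hr.injective_card_filter_lt (congrArg Fin.val h), by simp⟩
  obtain ⟨v, hv⟩ := hbij.2 ⟨k, hk⟩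
  exact ⟨v, congrArg Fin.val hv⟩

lemma sum_powersetCard_card_filter_eq {α β : Type*} [Fintype α] [Fintype β] [DecidableEq β]
    (f : α → Finset β) (p : α → Prop) [DecidablePred p] (k : ℕ) :
    ∑ Y ∈ powersetCard k univ, #{a | f a = Y ∧ p a} = #{a | #(f a) = k ∧ p a} := by
  rw [card_eq_sum_card_fiberwise (f := f) (t := powersetCard k univ)
    fun a ha => by simpa using (mem_filter.1 ha).2.1]
  refine sum_congr rfl fun Y hY => congrArg card (ext fun a => ?_)
  have hY := (mem_powersetCard.1 hY).2
  simp only [mem_filter, mem_univ, true_and]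
  constructor
  · rintro ⟨rfl, ha⟩
    exact ⟨⟨hY, ha⟩, rfl⟩
  · rintro ⟨⟨-, ha⟩, rfl⟩
    exact ⟨rfl, ha⟩

namespace SimpleGraph

variable {V : Type*} {G : SimpleGraph V}

section Within

variable {s t : Finset V} {x y z : V}

def within (G : SimpleGraph V) (s : Finset V) : SimpleGraph V where
  Adj x y := G.Adj x y ∧ x ∈ s ∧ y ∈ s
  symm := ⟨fun _ _ h => ⟨h.1.symm, h.2.2, h.2.1⟩⟩
  loopless := ⟨fun x h => G.loopless.irrefl x h.1⟩

lemma within_le : G.within s ≤ G := fun _ _ h => h.1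

lemma within_mono (h : s ⊆ t) : G.within s ≤ G.within t :=
  fun _ _ hxy => ⟨hxy.1, h hxy.2.1, h hxy.2.2⟩

lemma Reachable.mem_of_forall_adj {H : SimpleGraph V} {A : Set V}
    (hA : ∀ z w, z ∈ A → H.Adj z w → w ∈ A) (h : H.Reachable x y) (hx : x ∈ A) : y ∈ A := by
  obtain ⟨p⟩ := h
  induction p with
  | nil => exact hx
  | cons hadj _ ih => exact ih (hA _ _ hx hadj)

lemma Reachable.exists_adj_of_ne {H : SimpleGraph V} (h : H.Reachable x y) (hxy : x ≠ y) :
    ∃ z, H.Adj x z := by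
  obtain ⟨_ | ⟨hadj, _⟩⟩ := h
  · exact absurd rfl hxy
  · exact ⟨_, hadj⟩

lemma Reachable.mem_within (h : (G.within s).Reachable x y) (hx : x ∈ s) : y ∈ s :=
  Reachable.mem_of_forall_adj (H := G.within s) (A := s) (fun _ _ _ hzw => hzw.2.2) h hx

lemma reachable_within_of_support_subset {H : SimpleGraph V} (hH : H ≤ G) (p : H.Walk x y)
    (hp : ∀ z ∈ p.support, z ∈ s) : (G.within s).Reachable x y := by
  induction p with
  | nil => rfl
  | cons hadj q ih =>
    have hadj' : (G.within s).Adj _ _ := ⟨hH hadj, hp _ (by simp), hp _ (by simp)⟩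
    exact hadj'.reachable.trans (ih fun z hz => hp z (by simp [hz]))

open Classical in
noncomputable def componentIn (G : SimpleGraph V) (s : Finset V) (a : V) : Finset V :=
  s.filter ((G.within s).Reachable a)

variable {a b : V}

lemma mem_componentIn : z ∈ G.componentIn s a ↔ z ∈ s ∧ (G.within s).Reachable a z := by
  simp [componentIn]

lemma componentIn_subset : G.componentIn s a ⊆ s := fun _ hz => (mem_componentIn.1 hz).1

lemma mem_componentIn_comm (ha : a ∈ s) (hb : b ∈ s) :
    b ∈ G.componentIn s a ↔ a ∈ G.componentIn s b := by
  simp only [mem_componentIn, ha, hb, true_and]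
  exact ⟨Reachable.symm, Reachable.symm⟩

lemma self_mem_componentIn (ha : a ∈ s) : a ∈ G.componentIn s a := mem_componentIn.2 ⟨ha, .rfl⟩

lemma mem_componentIn_of_adj (hz : z ∈ G.componentIn s a) (hy : y ∈ s) (hzy : G.Adj z y) :
    y ∈ G.componentIn s a := by
  obtain ⟨hzs, hrz⟩ := mem_componentIn.1 hz
  exact mem_componentIn.2 ⟨hy, hrz.trans (Adj.reachable (G := G.within s) ⟨hzy, hzs, hy⟩)⟩

lemma reachable_within_componentIn (hz : z ∈ G.componentIn s a) (hy : y ∈ G.componentIn s a) :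
    (G.within (G.componentIn s a)).Reachable z y := by
  classical
  suffices h : ∀ z ∈ G.componentIn s a, (G.within (G.componentIn s a)).Reachable a z from
    (h z hz).symm.trans (h y hy)
  intro z hz
  obtain ⟨hzs, ⟨p⟩⟩ := mem_componentIn.1 hz
  refine reachable_within_of_support_subset within_le p fun w hw => mem_componentIn.2 ⟨?_, ?_⟩
  · exact Reachable.mem_within ⟨p.takeUntil w hw⟩ (Reachable.mem_within ⟨p.reverse⟩ hzs)
  · exact ⟨p.takeUntil w hw⟩

lemma ne_and_not_adj_of_mem_componentIn (hb : b ∉ G.componentIn s a) (hbs : b ∈ s)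
    (hz : z ∈ G.componentIn s a) (hw : y ∈ G.componentIn s b) : z ≠ y ∧ ¬ G.Adj z y := by
  obtain ⟨_, hrz⟩ := mem_componentIn.1 hz
  obtain ⟨hys, hry⟩ := mem_componentIn.1 hw
  refine ⟨fun h => hb (mem_componentIn.2 ⟨hbs, hrz.trans (h ▸ hry.symm)⟩), fun h => ?_⟩
  have := mem_componentIn.1 (mem_componentIn_of_adj hz hys h)
  exact hb (mem_componentIn.2 ⟨hbs, this.2.trans hry.symm⟩)

end Within

namespace Walk

variable {u v : V}

structure IsChordlessPath (p : G.Walk u v) : Prop where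
  getVert_injOn : Set.InjOn p.getVert {i | i ≤ p.length}
  eq_add_one_of_adj : ∀ a b, a < b → b ≤ p.length → G.Adj (p.getVert a) (p.getVert b) → b = a + 1

lemma isChordlessPath_of_length_eq_dist (p : G.Walk u v) (hp : p.length = G.dist u v) :
    p.IsChordlessPath where
  getVert_injOn := (p.isPath_of_length_eq_dist hp).getVert_injOn
  eq_add_one_of_adj a b hab hb hadj := by
    have := G.dist_le ((p.take a).append (cons hadj (p.drop b)))
    simp only [length_append, take_length, length_cons, drop_length] at this
    omega

lemma IsChordlessPath.mapLe_within {s : Finset V} {p : (G.within s).Walk u v}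
    (hp : p.IsChordlessPath) (hu : u ∈ s) : (p.mapLe within_le).IsChordlessPath where
  getVert_injOn a ha b hb h :=
    hp.getVert_injOn (by simpa using ha) (by simpa using hb) (by simpa using h)
  eq_add_one_of_adj a b hab hb hadj := by
    simp only [mapLe, getVert_map, Hom.ofLE_apply, length_map] at hadj hb
    exact hp.eq_add_one_of_adj a b hab hb
      ⟨hadj, Reachable.mem_within ⟨p.take a⟩ hu, Reachable.mem_within ⟨p.take b⟩ hu⟩

lemma getVert_append_of_le {w : V} (p : G.Walk u v) (q : G.Walk v w) {t : ℕ}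
    (ht : t ≤ p.length) : (p.append q).getVert t = p.getVert t := by
  rw [getVert_append', if_pos ht]

lemma getVert_append_of_ge {w : V} (p : G.Walk u v) (q : G.Walk v w) {t : ℕ}
    (ht : p.length ≤ t) : (p.append q).getVert t = q.getVert (t - p.length) := by
  rw [getVert_append, if_neg (not_lt.2 ht)]

end Walk

section Chordal

def IsSimplicialIn (G : SimpleGraph V) (T : Finset V) (v : V) : Prop :=
  G.IsClique (G.neighborSet v ∩ T)

lemma _root_.IsChordal.exists_chord (hch : IsChordal G) {x : V} (c : G.Walk x x) (hc : 4 ≤ c.length)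
    (hinj : ∀ a b, a < b → b < c.length → c.getVert a ≠ c.getVert b) :
    ∃ a b, a + 1 < b ∧ b < c.length ∧ (a = 0 → b + 1 < c.length) ∧
      G.Adj (c.getVert a) (c.getVert b) := by
  set n := c.length
  have : Fact (1 < n) := ⟨by omega⟩
  have hval : ∀ i : ZMod n, (i + 1).val = (i.val + 1) % n := fun i => by
    rw [ZMod.val_add, ZMod.val_one]
  have hinj' : Function.Injective fun i : ZMod n => c.getVert i.val := by
    intro i j hij
    rcases lt_trichotomy i.val j.val with h | h | h
    · exact absurd hij (hinj _ _ h (ZMod.val_lt j))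
    · exact ZMod.val_injective n h
    · exact absurd hij.symm (hinj _ _ h (ZMod.val_lt i))
  have hadj : ∀ i : ZMod n, G.Adj (c.getVert i.val) (c.getVert (i + 1).val) := by
    intro i
    have hi := ZMod.val_lt i
    have h := c.adj_getVert_succ hi
    rw [hval]
    rcases (Nat.lt_or_ge (i.val + 1) n) with hlt | hge
    · rwa [Nat.mod_eq_of_lt hlt]
    · rw [show i.val + 1 = n by omega, Nat.mod_self, c.getVert_zero]
      rwa [show i.val + 1 = n by omega, c.getVert_length] at h
  have key : ∀ i j : ZMod n, i.val < j.val → i + 1 ≠ j → j + 1 ≠ i →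
      G.Adj (c.getVert i.val) (c.getVert j.val) →
      ∃ a b, a + 1 < b ∧ b < n ∧ (a = 0 → b + 1 < n) ∧ G.Adj (c.getVert a) (c.getVert b) := by
    intro i j hij hij1 hji1 h
    have hj := ZMod.val_lt j
    refine ⟨i.val, j.val, ?_, hj, fun hi0 => ?_, h⟩
    · by_contra hle
      exact hij1 (ZMod.val_injective n (by rw [hval, Nat.mod_eq_of_lt (by omega)]; omega))
    · by_contra hle
      exact hji1 (ZMod.val_injective n (by
        rw [hval, show j.val + 1 = n by omega, Nat.mod_self, hi0]))
  obtain ⟨i, j, hij, hij1, hji1, h⟩ := hch n hc _ hinj' hadj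
  rcases lt_or_gt_of_ne (fun h => hij (ZMod.val_injective n h)) with hlt | hlt
  · exact key i j hlt hij1 hji1 h
  · exact key j i hlt hji1 hij1 h.symm

lemma _root_.IsChordal.false_of_chordlessPaths (hch : IsChordal G) {x y : V} {p : G.Walk x y}
    {q : G.Walk y x} (hp : p.IsChordlessPath) (hq : q.IsChordlessPath) (hp2 : 2 ≤ p.length)
    (hq2 : 2 ≤ q.length)
    (hpq : ∀ a b, 0 < a → a < p.length → 0 < b → b < q.length →
      p.getVert a ≠ q.getVert b ∧ ¬ G.Adj (p.getVert a) (q.getVert b)) : False := by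
  set L := p.length
  set c := p.append q
  have hlen : c.length = L + q.length := Walk.length_append p q
  have hcp : ∀ t ≤ L, c.getVert t = p.getVert t := fun t => p.getVert_append_of_le q
  have hcq : ∀ t, L ≤ t → c.getVert t = q.getVert (t - L) := fun t => p.getVert_append_of_ge q
  have hx : c.getVert 0 = q.getVert q.length := by
    rw [Walk.getVert_zero, Walk.getVert_length]
  have hinj : ∀ a b, a < b → b < c.length → c.getVert a ≠ c.getVert b := by
    intro a b hab hb
    by_cases hbL : b ≤ L
    · rw [hcp a (by omega), hcp b hbL]
      exact hp.getVert_injOn.ne (show a ≤ L by omega) hbL hab.ne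
    by_cases haL : L ≤ a
    · rw [hcq a haL, hcq b (by omega)]
      exact hq.getVert_injOn.ne (show a - L ≤ q.length by omega)
        (show b - L ≤ q.length by omega) (by omega)
    rw [hcq b (by omega)]
    rcases Nat.eq_zero_or_pos a with rfl | ha
    · rw [hx]
      exact hq.getVert_injOn.ne (show q.length ≤ q.length from le_rfl)
        (show b - L ≤ q.length by omega) (by omega)
    · rw [hcp a (by omega)]
      exact (hpq a (b - L) ha (by omega) (by omega) (by omega)).1
  obtain ⟨a, b, hab, hb, ha0, hadj⟩ := hch.exists_chord c (by omega) hinj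
  by_cases hbL : b ≤ L
  · rw [hcp a (by omega), hcp b hbL] at hadj
    have := hp.eq_add_one_of_adj a b (by omega) hbL hadj
    omega
  by_cases haL : L ≤ a
  · rw [hcq a haL, hcq b (by omega)] at hadj
    have := hq.eq_add_one_of_adj _ _ (by omega) (by omega) hadj
    omega
  rw [hcq b (by omega)] at hadj
  rcases Nat.eq_zero_or_pos a with rfl | ha
  · rw [hx] at hadj
    have := hq.eq_add_one_of_adj _ _ (by omega) le_rfl hadj.symm
    omega
  · rw [hcp a (by omega)] at hadj
    exact (hpq a (b - L) ha (by omega) (by omega) (by omega)).2 hadj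

variable [DecidableEq V]

lemma exists_chordlessPath_through {A : Finset V} {x y zx zy : V} (hxy : x ≠ y)
    (hnadj : ¬ G.Adj x y) (hxz : G.Adj x zx) (hyz : G.Adj y zy) (hzx : zx ∈ A) (hzy : zy ∈ A)
    (hA : (G.within A).Reachable zx zy) :
    ∃ p : G.Walk x y, p.IsChordlessPath ∧ 2 ≤ p.length ∧
      ∀ t, 0 < t → t < p.length → p.getVert t ∈ A := by
  set U := insert x (insert y A)
  have hxU : x ∈ U := mem_insert_self _ _
  have hyU : y ∈ U := by simp [U]
  have hAU : A ⊆ U := fun z hz => by simp [U, hz]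
  have hreach : (G.within U).Reachable x y :=
    (Adj.reachable (G := G.within U) ⟨hxz, hxU, hAU hzx⟩).trans
      ((hA.mono (within_mono hAU)).trans (Adj.reachable (G := G.within U) ⟨hyz.symm, hAU hzy, hyU⟩))
  obtain ⟨p₀, hp₀⟩ := hreach.exists_walk_length_eq_dist
  set p := p₀.mapLe within_le
  have hp := (p₀.isChordlessPath_of_length_eq_dist hp₀).mapLe_within hxU
  refine ⟨p, hp, ?_, fun t ht0 htl => ?_⟩
  · have h0 : p.length ≠ 0 := fun h => hxy (Walk.eq_of_length_eq_zero h)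
    have h1 : p.length ≠ 1 := fun h => hnadj (by
      have := p.adj_getVert_succ (i := 0) (by omega)
      rwa [Walk.getVert_zero, show 0 + 1 = p.length by omega, Walk.getVert_length] at this)
    omega
  · have hU : p.getVert t ∈ U := by
      simpa [p] using Reachable.mem_within ⟨p₀.take t⟩ hxU
    have hnx := hp.getVert_injOn.ne (show 0 ≤ p.length by omega) (show t ≤ p.length by omega)
      ht0.ne
    have hny := hp.getVert_injOn.ne (show t ≤ p.length by omega)
      (show p.length ≤ p.length from le_rfl) htl.ne
    rw [Walk.getVert_zero] at hnx
    rw [Walk.getVert_length] at hny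
    simp only [U, mem_insert] at hU
    exact hU.resolve_left hnx.symm |>.resolve_left hny

lemma _root_.IsChordal.adj_of_separated (hch : IsChordal G) {A B : Finset V}
    (hA : ∀ z ∈ A, ∀ w ∈ A, (G.within A).Reachable z w)
    (hB : ∀ z ∈ B, ∀ w ∈ B, (G.within B).Reachable z w)
    (hAB : ∀ z ∈ A, ∀ w ∈ B, z ≠ w ∧ ¬ G.Adj z w) {x y : V} (hxy : x ≠ y)
    (hxA : ∃ z ∈ A, G.Adj x z) (hyA : ∃ z ∈ A, G.Adj y z) (hxB : ∃ z ∈ B, G.Adj x z)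
    (hyB : ∃ z ∈ B, G.Adj y z) : G.Adj x y := by
  by_contra hnadj
  obtain ⟨zxA, hzxA, hxzA⟩ := hxA
  obtain ⟨zyA, hzyA, hyzA⟩ := hyA
  obtain ⟨zxB, hzxB, hxzB⟩ := hxB
  obtain ⟨zyB, hzyB, hyzB⟩ := hyB
  obtain ⟨p, hp, hp2, hpA⟩ := exists_chordlessPath_through hxy hnadj hxzA hyzA hzxA hzyA
    (hA _ hzxA _ hzyA)
  obtain ⟨q, hq, hq2, hqB⟩ := exists_chordlessPath_through hxy.symm (fun h => hnadj h.symm)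
    hyzB hxzB hzyB hzxB (hB _ hzyB _ hzxB)
  exact hch.false_of_chordlessPaths hp hq hp2 hq2 fun a b ha0 ha hb0 hb =>
    hAB _ (hpA a ha0 ha) _ (hqB b hb0 hb)

lemma exists_adj_mem_componentIn_of_mem_componentIn_erase {T S : Finset V} {a b s : V}
    (ha : a ∈ T \ S)
    (hb : b ∉ G.componentIn (T \ S) a) (hb' : b ∈ G.componentIn (T \ S.erase s) a) :
    ∃ z ∈ G.componentIn (T \ S) a, G.Adj s z := by
  by_contra! hs
  refine hb (Reachable.mem_of_forall_adj (fun z w hz hzw => ?_) (mem_componentIn.1 hb').2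
    (self_mem_componentIn ha))
  obtain ⟨hzw, -, hw⟩ := hzw
  have hws : w ≠ s := by rintro rfl; exact hs z hz hzw.symm
  exact mem_componentIn_of_adj hz (by simp_all) hzw

lemma exists_isSimplicialIn_notMem {U S : Finset V} (hS : G.IsClique (S : Set V)) {a : V}
    (ha : a ∈ U) (haS : a ∉ S)
    (h : G.IsClique (U : Set V) ∨ ∃ v ∈ U, ∃ w ∈ U, v ≠ w ∧ ¬ G.Adj v w ∧
      G.IsSimplicialIn U v ∧ G.IsSimplicialIn U w) :
    ∃ v ∈ U, v ∉ S ∧ G.IsSimplicialIn U v := by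
  rcases h with hU | ⟨v, hv, w, hw, hvw, hnadj, hvs, hws⟩
  · exact ⟨a, ha, haS, hU.subset Set.inter_subset_right⟩
  by_cases hvS : v ∈ S
  · by_cases hwS : w ∈ S
    · exact absurd (hS hvS hwS hvw) hnadj
    · exact ⟨w, hw, hwS, hws⟩
  · exact ⟨v, hv, hvS, hvs⟩

lemma IsSimplicialIn.of_mem_componentIn {T S : Finset V} {a v : V}
    (hv : v ∈ G.componentIn (T \ S) a) (hvs : G.IsSimplicialIn (G.componentIn (T \ S) a ∪ S) v) :
    G.IsSimplicialIn T v := by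
  refine hvs.subset ?_
  rintro u ⟨hvu, huT⟩
  refine ⟨hvu, ?_⟩
  by_cases huS : u ∈ S
  · simp [huS]
  · exact mem_coe.2 (mem_union_left _ (mem_componentIn_of_adj hv (mem_sdiff.2 ⟨huT, huS⟩) hvu))

lemma _root_.IsChordal.exists_isClique_separator (hch : IsChordal G) {T : Finset V} {a b : V}
    (ha : a ∈ T) (hb : b ∈ T) (hab : a ≠ b) (hnadj : ¬ G.Adj a b) :
    ∃ S ⊆ T, a ∉ S ∧ b ∉ S ∧ b ∉ G.componentIn (T \ S) a ∧ G.IsClique (S : Set V) := by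
  classical
  set seps := T.powerset.filter fun S => a ∉ S ∧ b ∉ S ∧ b ∉ G.componentIn (T \ S) a
  have h₀ : T \ {a, b} ∈ seps := by
    refine mem_filter.2 ⟨mem_powerset.2 sdiff_subset, by simp, by simp, fun h => ?_⟩
    obtain ⟨z, haz, -, hz⟩ := (mem_componentIn.1 h).2.exists_adj_of_ne hab
    have : z = a ∨ z = b := by simp_all
    rcases this with rfl | rfl
    · exact G.loopless.irrefl _ haz
    · exact hnadj haz
  obtain ⟨S, hS, hmin⟩ := exists_min_image seps card ⟨_, h₀⟩
  obtain ⟨hST, haS, hbS, hsep⟩ := by simpa [seps] using hS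
  refine ⟨S, hST, haS, hbS, hsep, ?_⟩
  have haTS : a ∈ T \ S := mem_sdiff.2 ⟨ha, haS⟩
  have hbTS : b ∈ T \ S := mem_sdiff.2 ⟨hb, hbS⟩
  have hsep' : a ∉ G.componentIn (T \ S) b := (mem_componentIn_comm haTS hbTS).not.1 hsep
  have hfull : ∀ s ∈ S, b ∈ G.componentIn (T \ S.erase s) a := by
    intro s hs
    by_contra h
    have := hmin (S.erase s) (by simp_all [seps, (erase_subset s S).trans hST])
    have := card_erase_of_mem hs
    have := card_pos.2 ⟨s, hs⟩
    omega
  have hfull' : ∀ s ∈ S, a ∈ G.componentIn (T \ S.erase s) b := fun s hs =>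
    (mem_componentIn_comm (by simp [ha, haS]) (by simp [hb, hbS])).1 (hfull s hs)
  intro x hx y hy hxy
  refine hch.adj_of_separated (A := G.componentIn (T \ S) a) (B := G.componentIn (T \ S) b)
    (fun _ hz _ hw => reachable_within_componentIn hz hw)
    (fun _ hz _ hw => reachable_within_componentIn hz hw)
    (fun z hz w hw => ne_and_not_adj_of_mem_componentIn hsep hbTS hz hw) hxy
    ?_ ?_ ?_ ?_
  · exact exists_adj_mem_componentIn_of_mem_componentIn_erase haTS hsep (hfull x hx)
  · exact exists_adj_mem_componentIn_of_mem_componentIn_erase haTS hsep (hfull y hy)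
  · exact exists_adj_mem_componentIn_of_mem_componentIn_erase hbTS hsep' (hfull' x hx)
  · exact exists_adj_mem_componentIn_of_mem_componentIn_erase hbTS hsep' (hfull' y hy)

theorem _root_.IsChordal.isClique_or_exists_isSimplicialIn (hch : IsChordal G) (T : Finset V) :
    G.IsClique (T : Set V) ∨ ∃ v ∈ T, ∃ w ∈ T, v ≠ w ∧ ¬ G.Adj v w ∧
      G.IsSimplicialIn T v ∧ G.IsSimplicialIn T w := by
  induction T using Finset.strongInduction with
  | H T ih =>
  by_cases hT : G.IsClique (T : Set V)
  · exact Or.inl hT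
  obtain ⟨a, ha, b, hb, hab, hnadj⟩ : ∃ a ∈ T, ∃ b ∈ T, a ≠ b ∧ ¬ G.Adj a b := by
    simpa [IsClique, Set.Pairwise] using hT
  obtain ⟨S, hST, haS, hbS, hsep, hS⟩ := hch.exists_isClique_separator ha hb hab hnadj
  have hside : ∀ c d, c ∈ T \ S → d ∈ T \ S → d ∉ G.componentIn (T \ S) c →
      ∃ v ∈ G.componentIn (T \ S) c, G.IsSimplicialIn T v := by
    intro c d hc hd hsep
    have hcU : c ∈ G.componentIn (T \ S) c ∪ S := mem_union_left _ (self_mem_componentIn hc)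
    have hU : G.componentIn (T \ S) c ∪ S ⊂ T := by
      refine (ssubset_iff_of_subset (union_subset (componentIn_subset.trans sdiff_subset) hST)).2
        ⟨d, (mem_sdiff.1 hd).1, ?_⟩
      simp [hsep, (mem_sdiff.1 hd).2]
    obtain ⟨v, hvU, hvS, hvs⟩ :=
      exists_isSimplicialIn_notMem hS hcU (mem_sdiff.1 hc).2 (ih _ hU)
    have hv : v ∈ G.componentIn (T \ S) c := (mem_union.1 hvU).resolve_right hvS
    exact ⟨v, hv, hvs.of_mem_componentIn hv⟩
  have haTS : a ∈ T \ S := mem_sdiff.2 ⟨ha, haS⟩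
  have hbTS : b ∈ T \ S := mem_sdiff.2 ⟨hb, hbS⟩
  obtain ⟨v, hv, hvs⟩ := hside a b haTS hbTS hsep
  obtain ⟨w, hw, hws⟩ := hside b a hbTS haTS ((mem_componentIn_comm haTS hbTS).not.1 hsep)
  obtain ⟨hvw, hnvw⟩ := ne_and_not_adj_of_mem_componentIn hsep hbTS hv hw
  exact Or.inr ⟨v, (mem_sdiff.1 (componentIn_subset hv)).1, w,
    (mem_sdiff.1 (componentIn_subset hw)).1, hvw, hnvw, hvs, hws⟩

theorem _root_.IsChordal.exists_isSimplicialIn (hch : IsChordal G) {T : Finset V}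
    (hT : T.Nonempty) : ∃ v ∈ T, G.IsSimplicialIn T v := by
  rcases hch.isClique_or_exists_isSimplicialIn T with hc | ⟨v, hv, -, -, -, -, hvs, -⟩
  · obtain ⟨v, hv⟩ := hT
    exact ⟨v, hv, hc.subset Set.inter_subset_right⟩
  · exact ⟨v, hv, hvs⟩

end Chordal

structure IsPerfectEliminationOrder (G : SimpleGraph V) (r : V → ℕ) : Prop where
  injective : Function.Injective r
  isClique : ∀ v, G.IsClique {u | G.Adj v u ∧ r u < r v}

lemma exists_injOn_isClique_neighborSet_inter_lt [DecidableEq V]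
    (h : ∀ T : Finset V, T.Nonempty → ∃ v ∈ T, G.IsSimplicialIn T v) (T : Finset V) :
    ∃ r : V → ℕ, Set.InjOn r T ∧
      ∀ v ∈ T, G.IsClique (G.neighborSet v ∩ {u | u ∈ T ∧ r u < r v}) := by
  induction T using Finset.strongInduction with
  | H T ih =>
  rcases T.eq_empty_or_nonempty with rfl | hT
  · exact ⟨fun _ => 0, by simp, by simp⟩
  obtain ⟨v, hv, hvs⟩ := h T hT
  obtain ⟨r, hinj, hcl⟩ := ih (T.erase v) (erase_ssubset hv)
  have hlt : ∀ u ∈ T.erase v, r u < (T.erase v).sup r + 1 := fun u hu =>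
    Nat.lt_succ_of_le (le_sup hu)
  refine ⟨Function.update r v ((T.erase v).sup r + 1), fun x hx y hy hxy => ?_, fun w hw => ?_⟩
  · by_cases hxv : x = v <;> by_cases hyv : y = v
    · rw [hxv, hyv]
    · simp only [hxv, Function.update_self, Function.update_of_ne hyv] at hxy
      exact absurd hxy (hlt y (mem_erase.2 ⟨hyv, hy⟩)).ne'
    · simp only [hyv, Function.update_self, Function.update_of_ne hxv] at hxy
      exact absurd hxy (hlt x (mem_erase.2 ⟨hxv, hx⟩)).ne
    · simp only [Function.update_of_ne hxv, Function.update_of_ne hyv] at hxy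
      exact hinj (mem_erase.2 ⟨hxv, hx⟩) (mem_erase.2 ⟨hyv, hy⟩) hxy
  · by_cases hwv : w = v
    · subst hwv
      refine hvs.subset ?_
      rintro u ⟨hwu, huT, -⟩
      exact ⟨hwu, huT⟩
    · have hwT : w ∈ T.erase v := mem_erase.2 ⟨hwv, hw⟩
      refine (hcl w hwT).subset ?_
      rintro u ⟨hwu, huT, hu⟩
      refine ⟨hwu, ?_⟩
      have huv : u ≠ v := by
        rintro rfl
        simp only [Function.update_self, Function.update_of_ne hwv] at hu
        exact absurd hu (hlt w hwT).not_gt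
      simp only [Function.update_of_ne huv, Function.update_of_ne hwv] at hu
      exact ⟨mem_erase.2 ⟨huv, huT⟩, hu⟩

theorem exists_isPerfectEliminationOrder [Fintype V] [DecidableEq V]
    (h : ∀ T : Finset V, T.Nonempty → ∃ v ∈ T, G.IsSimplicialIn T v) :
    ∃ r, G.IsPerfectEliminationOrder r := by
  obtain ⟨r, hinj, hcl⟩ := exists_injOn_isClique_neighborSet_inter_lt h univ
  refine ⟨r, Set.injOn_univ.1 (by simpa using hinj), fun v => (hcl v (mem_univ v)).subset ?_⟩
  rintro u ⟨hvu, hu⟩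
  exact ⟨hvu, mem_univ u, hu⟩

namespace IsPerfectEliminationOrder

variable {r : V → ℕ}

lemma induce (hr : G.IsPerfectEliminationOrder r) (s : Set V) :
    (G.induce s).IsPerfectEliminationOrder (r ∘ (↑)) where
  injective := hr.injective.comp Subtype.val_injective
  isClique v _ hx _ hy hxy := hr.isClique v hx hy (Subtype.val_injective.ne hxy)

lemma exists_adj_lt_of_reachable (hr : G.IsPerfectEliminationOrder r) {x y : V}
    (h : G.Reachable x y) (hxy : r x < r y) : ∃ z, G.Adj y z ∧ r z < r y := by
  obtain ⟨p, hp⟩ := h.symm.exists_walk_length_eq_dist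
  have hc := p.isChordlessPath_of_length_eq_dist hp
  have hlen : 0 < p.length := Nat.pos_of_ne_zero fun h0 =>
    (Walk.eq_of_length_eq_zero h0 ▸ hxy).false
  obtain ⟨t, ht, hmax⟩ := exists_max_image (range (p.length + 1)) (fun t => r (p.getVert t))
    ⟨0, by simp⟩
  have ht : t ≤ p.length := Nat.lt_succ_iff.1 (mem_range.1 ht)
  have hlt : ∀ s ≤ p.length, s ≠ t → r (p.getVert s) < r (p.getVert t) := fun s hs hst =>
    (hmax s (mem_range.2 (Nat.lt_succ_of_le hs))).lt_of_ne fun he =>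
      hc.getVert_injOn.ne hs ht hst (hr.injective he)
  rcases Nat.eq_zero_or_pos t with rfl | ht0
  · refine ⟨p.getVert 1, ?_, ?_⟩
    · simpa using p.adj_getVert_succ hlen
    · simpa using hlt 1 hlen (by omega)
  rcases ht.lt_or_eq with htl | rfl
  · have h₁ : G.Adj (p.getVert t) (p.getVert (t - 1)) := by
      simpa [Nat.sub_add_cancel ht0] using (p.adj_getVert_succ (i := t - 1) (by omega)).symm
    have h₂ : G.Adj (p.getVert t) (p.getVert (t + 1)) := p.adj_getVert_succ htl
    have hadj := hr.isClique _ ⟨h₁, hlt (t - 1) (by omega) (by omega)⟩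
      ⟨h₂, hlt (t + 1) htl (by omega)⟩
      (hc.getVert_injOn.ne (show t - 1 ≤ p.length by omega) htl (by omega))
    have := hc.eq_add_one_of_adj (t - 1) (t + 1) (by omega) htl hadj
    omega
  · have := hmax 0 (by simp)
    simp only [Walk.getVert_zero, Walk.getVert_length] at this
    omega

end IsPerfectEliminationOrder

section EarlierNeighbors

variable [Fintype V] [DecidableRel G.Adj] {r : V → ℕ}

def earlierNeighborFinset (G : SimpleGraph V) [DecidableRel G.Adj] (r : V → ℕ) (v : V) :
    Finset V :=
  {u | G.Adj v u ∧ r u < r v}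

@[simp] lemma mem_earlierNeighborFinset {u v : V} :
    u ∈ G.earlierNeighborFinset r v ↔ G.Adj v u ∧ r u < r v := by
  simp [earlierNeighborFinset]

lemma notMem_earlierNeighborFinset_self (v : V) : v ∉ G.earlierNeighborFinset r v := by
  simp

lemma eq_and_eq_of_insert_eq [DecidableEq V] {v w : V} {t t' : Finset V}
    (ht : t ⊆ G.earlierNeighborFinset r v) (ht' : t' ⊆ G.earlierNeighborFinset r w)
    (h : insert v t = insert w t') : v = w ∧ t = t' := by
  have hvt : v ∉ t := fun hv => notMem_earlierNeighborFinset_self v (ht hv)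
  have hwt : w ∉ t' := fun hw => notMem_earlierNeighborFinset_self w (ht' hw)
  have hvw : v = w := by
    by_contra hvw
    have hv : v ∈ insert w t' := h ▸ mem_insert_self v t
    have hw : w ∈ insert v t := h ▸ mem_insert_self w t'
    have := (mem_earlierNeighborFinset.1 (ht' ((mem_insert.1 hv).resolve_left hvw))).2
    have := (mem_earlierNeighborFinset.1 (ht ((mem_insert.1 hw).resolve_left (Ne.symm hvw)))).2
    omega
  subst hvw
  exact ⟨rfl, by rw [← erase_insert hvt, h, erase_insert hwt]⟩

namespace IsPerfectEliminationOrder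

lemma isNClique_insert_earlierNeighborFinset [DecidableEq V] (hr : G.IsPerfectEliminationOrder r)
    (v : V) : G.IsNClique (#(G.earlierNeighborFinset r v) + 1)
      (insert v (G.earlierNeighborFinset r v)) := by
  refine ⟨?_, card_insert_of_notMem (notMem_earlierNeighborFinset_self v)⟩
  rw [coe_insert]
  exact (hr.isClique v).subset (fun u hu => by simpa using hu) |>.insert
    fun u hu _ => (mem_earlierNeighborFinset.1 hu).1

lemma cliqueCount_succ (hr : G.IsPerfectEliminationOrder r) (m : ℕ) :
    cliqueCount G (m + 1) = ∑ v, (#(G.earlierNeighborFinset r v)).choose m := by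
  classical
  have hset : {s : Finset V | G.IsNClique (m + 1) s} = ↑(G.cliqueFinset (m + 1)) := by
    ext; simp
  simp_rw [cliqueCount, hset, Set.ncard_coe_finset, ← card_powersetCard, ← card_sigma]
  symm
  refine card_bij (fun p _ => insert p.1 p.2) ?_ ?_ ?_
  · rintro ⟨v, t⟩ h
    obtain ⟨htv, htm⟩ := mem_powersetCard.1 (mem_sigma.1 h).2
    have hvt : v ∉ t := fun hv => notMem_earlierNeighborFinset_self v (htv hv)
    refine mem_cliqueFinset_iff.2 ⟨?_, by rw [card_insert_of_notMem hvt, htm]⟩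
    exact (hr.isNClique_insert_earlierNeighborFinset v).1.subset
      (coe_subset.2 (insert_subset_insert v htv))
  · rintro ⟨v, t⟩ h ⟨w, t'⟩ h' heq
    obtain ⟨rfl, rfl⟩ := eq_and_eq_of_insert_eq (mem_powersetCard.1 (mem_sigma.1 h).2).1
      (mem_powersetCard.1 (mem_sigma.1 h').2).1 heq
    rfl
  · intro s hs
    obtain ⟨hcl, hcard⟩ := mem_cliqueFinset_iff.1 hs
    obtain ⟨v, hv, hmax⟩ := exists_max_image s r (card_pos.1 (by omega))
    refine ⟨⟨v, s.erase v⟩, mem_sigma.2 ⟨mem_univ v, mem_powersetCard.2 ⟨fun u hu => ?_, ?_⟩⟩,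
      insert_erase hv⟩
    · obtain ⟨huv, hus⟩ := mem_erase.1 hu
      exact mem_earlierNeighborFinset.2 ⟨hcl hv hus (Ne.symm huv),
        (hmax u hus).lt_of_ne fun h => huv (hr.injective h)⟩
    · rw [card_erase_of_mem hv, hcard, Nat.add_sub_cancel]

lemma sum_cliqueCount_mul_pow {R : Type*} [CommSemiring R] (hr : G.IsPerfectEliminationOrder r)
    {d : ℕ} (hd : ∀ v, #(G.earlierNeighborFinset r v) < d) (x : R) :
    ∑ t ∈ range d, (cliqueCount G (t + 1) : R) * x ^ t =
      ∑ v, (x + 1) ^ #(G.earlierNeighborFinset r v) := by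
  simp_rw [hr.cliqueCount_succ, Nat.cast_sum, sum_mul]
  rw [sum_comm]
  exact sum_congr rfl fun v _ => (add_one_pow_eq_sum_range x (hd v)).symm

end IsPerfectEliminationOrder

end EarlierNeighbors

section Connectivity

variable [Fintype V] [DecidableEq V]

lemma vertexConnectivity_add_two_le (hG : G ≠ ⊤) : vertexConnectivity G + 2 ≤ Fintype.card V := by
  obtain ⟨u, w, huw, hnadj⟩ := ne_top_iff_exists_not_adj.1 hG
  have hcut : IsVertexCut G {u, w}ᶜ := fun hconn => by
    have hu : u ∈ (↑({u, w}ᶜᶜ : Finset V) : Set V) := by simp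
    have hw : w ∈ (↑({u, w}ᶜᶜ : Finset V) : Set V) := by simp
    obtain ⟨z, huz⟩ := (hconn.preconnected ⟨u, hu⟩ ⟨w, hw⟩).exists_adj_of_ne
      (fun h => huw (congrArg Subtype.val h))
    have huz' : G.Adj u z.1 := huz
    have : z.1 = u ∨ z.1 = w := by simpa using z.2
    rcases this with h | h <;> rw [h] at huz'
    · exact G.loopless.irrefl u huz'
    · exact hnadj huz'
  have : vertexConnectivity G ≤ #({u, w}ᶜ) := Nat.sInf_le ⟨_, hcut, rfl⟩
  rw [card_compl, card_pair huw] at this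
  have : 2 ≤ Fintype.card V := by simpa [card_pair huw] using card_le_univ {u, w}
  omega

variable [DecidableRel G.Adj] {r : V → ℕ}

namespace IsPerfectEliminationOrder

lemma vertexConnectivity_le_card (hr : G.IsPerfectEliminationOrder r) {u v : V}
    (hu : r u < r v) (hvu : ¬ G.Adj v u) :
    vertexConnectivity G ≤ #(G.earlierNeighborFinset r v) := by
  refine Nat.sInf_le ⟨_, fun hconn => ?_, rfl⟩
  have hu' : u ∈ (↑(G.earlierNeighborFinset r v)ᶜ : Set V) := by simp [hvu]
  have hv' : v ∈ (↑(G.earlierNeighborFinset r v)ᶜ : Set V) := by simp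
  obtain ⟨z, hvz, hz⟩ := (hr.induce _).exists_adj_lt_of_reachable
    (hconn.preconnected ⟨u, hu'⟩ ⟨v, hv'⟩) hu
  exact (by simpa using z.2 : z.1 ∉ G.earlierNeighborFinset r v)
    (mem_earlierNeighborFinset.2 ⟨hvz, hz⟩)

lemma numComponents_eq_card (hr : G.IsPerfectEliminationOrder r) (Y : Finset V) :
    numComponents G Y = #{v | v ∉ Y ∧ G.earlierNeighborFinset r v ⊆ Y} := by
  classical
  set H := G.induce (↑Yᶜ : Set V)
  set F : Finset V := {v | v ∉ Y ∧ G.earlierNeighborFinset r v ⊆ Y}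
  have hF : ∀ v ∈ F, v ∈ (↑Yᶜ : Set V) := fun v hv => by simp_all [F]
  have hroot : ∀ v (hv : v ∈ F) (w : ↑(↑Yᶜ : Set V)), H.Reachable w ⟨v, hF v hv⟩ →
      ¬ r w < r v := fun v hv w hw hlt => by
    obtain ⟨z, hvz, hz⟩ := (hr.induce _).exists_adj_lt_of_reachable hw hlt
    have := (mem_filter.1 hv).2.2 (mem_earlierNeighborFinset.2 ⟨hvz, hz⟩)
    exact (by simpa using z.2 : z.1 ∉ Y) this
  let φ : F → H.ConnectedComponent := fun v => H.connectedComponentMk ⟨v, hF v v.2⟩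
  have hφ : Function.Bijective φ := by
    refine ⟨fun v w h => ?_, fun c => ?_⟩
    · have hvw := ConnectedComponent.exact h
      rcases lt_trichotomy (r v) (r w) with hlt | heq | hlt
      · exact absurd hlt (hroot w w.2 _ hvw)
      · exact Subtype.ext (hr.injective heq)
      · exact absurd hlt (hroot v v.2 _ hvw.symm)
    · obtain ⟨v, hv, hmin⟩ := exists_min_image {z | H.connectedComponentMk z = c} (r ∘ (↑))
        (c.ind fun x => ⟨x, by simp⟩)
      have hvc : H.connectedComponentMk v = c := (mem_filter.1 hv).2
      have hvF : v.1 ∈ F := by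
        refine mem_filter.2 ⟨mem_univ _, by simpa using v.2, fun u hu => ?_⟩
        obtain ⟨hvu, hu⟩ := mem_earlierNeighborFinset.1 hu
        by_contra huY
        have hadj : H.Adj v ⟨u, by simpa using huY⟩ := hvu
        have huc : H.connectedComponentMk ⟨u, by simpa using huY⟩ = c :=
          hvc ▸ (ConnectedComponent.eq.2 hadj.reachable).symm
        exact absurd (hmin _ (mem_filter.2 ⟨mem_univ _, huc⟩)) (not_le.2 hu)
      exact ⟨⟨v, hvF⟩, hvc⟩
  rw [numComponents, ← Nat.card_eq_of_bijective φ hφ, Nat.card_eq_fintype_card, Fintype.card_coe]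


lemma numComponents_eq_card_add_one (hr : G.IsPerfectEliminationOrder r) {Y : Finset V}
    (hY : #Y ≤ vertexConnectivity G) (hYc : Yᶜ.Nonempty) :
    numComponents G Y =
      #{v | G.earlierNeighborFinset r v = Y ∧ ∃ u, r u < r v ∧ ¬ G.Adj v u} + 1 := by
  obtain ⟨m, hm, hmin⟩ := exists_min_image Yᶜ r hYc
  have hmY : m ∉ Y := mem_compl.1 hm
  have hbefore : ∀ u, r u < r m → u ∈ Y := fun u hu => by
    by_contra huY
    exact (hmin u (mem_compl.2 huY)).not_gt hu
  rw [hr.numComponents_eq_card, ← card_insert_of_notMem (a := m)]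
  · congr 1
    ext v
    simp only [mem_filter, mem_univ, true_and, mem_insert]
    constructor
    · rintro ⟨hvY, hsub⟩
      refine or_iff_not_imp_left.2 fun hvm => ?_
      have hmv : r m < r v :=
        (hmin v (mem_compl.2 hvY)).lt_of_ne fun h => hvm (hr.injective h).symm
      have hnadj : ¬ G.Adj v m := fun h => hmY (hsub (mem_earlierNeighborFinset.2 ⟨h, hmv⟩))
      exact ⟨eq_of_subset_of_card_le hsub (hY.trans (hr.vertexConnectivity_le_card hmv hnadj)),
        m, hmv, hnadj⟩
    · rintro (rfl | ⟨rfl, -⟩)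
      · exact ⟨hmY, fun u hu => hbefore u (mem_earlierNeighborFinset.1 hu).2⟩
      · exact ⟨notMem_earlierNeighborFinset_self v, subset_rfl⟩
  · simp only [mem_filter, mem_univ, true_and, not_and, not_exists, not_and, not_not]
    intro hEN u hu
    exact (mem_earlierNeighborFinset.1 (hEN ▸ hbefore u hu)).1

lemma existsUnique_card_earlierNeighborFinset_eq (hr : G.IsPerfectEliminationOrder r) {k : ℕ}
    (hk : k ≤ vertexConnectivity G) (hkn : k < Fintype.card V) :
    ∃! v, #(G.earlierNeighborFinset r v) = k ∧ ∀ u, r u < r v → G.Adj v u := by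
  have hEN : ∀ v, (∀ u, r u < r v → G.Adj v u) →
      G.earlierNeighborFinset r v = ({u | r u < r v} : Finset V) := fun v h => by
    ext u
    simpa using h u
  obtain ⟨v, hv⟩ := hr.injective.exists_card_filter_lt_eq hkn
  have hvadj : ∀ u, r u < r v → G.Adj v u := by
    by_contra! ⟨u, hu, hnadj⟩
    have h₁ := hr.vertexConnectivity_le_card hu hnadj
    have h₂ : #(G.earlierNeighborFinset r v) < #{u | r u < r v} :=
      card_lt_card ((ssubset_iff_of_subset fun w hw => by simp_all).2
        ⟨u, by simp [hu], by simp [hnadj]⟩)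
    omega
  refine ⟨v, ⟨by rw [hEN v hvadj, hv], hvadj⟩, fun w ⟨hw, hwadj⟩ =>
    hr.injective.injective_card_filter_lt ?_⟩
  dsimp only
  rw [← hEN w hwadj, hw, hv]

lemma card_filter_card_earlierNeighborFinset_eq (hr : G.IsPerfectEliminationOrder r) {k : ℕ}
    (hk : k ≤ vertexConnectivity G) (hkn : k < Fintype.card V) :
    #{v | #(G.earlierNeighborFinset r v) = k} =
      #{v | #(G.earlierNeighborFinset r v) = k ∧ ∃ u, r u < r v ∧ ¬ G.Adj v u} + 1 := by
  rw [← card_filter_add_card_filter_not (fun v => ∃ u, r u < r v ∧ ¬ G.Adj v u),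
    filter_filter, filter_filter]
  congr 1
  rw [← Fintype.existsUnique_iff_card_one]
  simpa using hr.existsUnique_card_earlierNeighborFinset_eq hk hkn

lemma eq_card_of_sum_mul_add_one_pow_eq (hr : G.IsPerfectEliminationOrder r) {d : ℕ}
    (hdmax : ∀ (m : ℕ) (s : Finset V), G.IsNClique m s → m ≤ d) {b : ℕ → ℤ}
    (hb : ∀ x : ℤ, ∑ i ∈ Icc 1 d, b i * (x + 1) ^ (i - 1) =
      ∑ i ∈ Icc 1 d, (cliqueCount G i : ℤ) * x ^ (i - 1))
    {k : ℕ} (hk : k < d) : b (k + 1) = #{v | #(G.earlierNeighborFinset r v) = k} := by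
  have hd : ∀ v, #(G.earlierNeighborFinset r v) < d := fun v =>
    hdmax _ _ (hr.isNClique_insert_earlierNeighborFinset v)
  refine eq_of_forall_sum_range_mul_pow_eq (a := fun t => b (t + 1))
    (a' := fun t => (#{v | #(G.earlierNeighborFinset r v) = t} : ℤ)) (fun y => ?_) hk
  have h := hb (y - 1)
  simp only [sum_Icc_one_eq_sum_range, Nat.add_sub_cancel, sub_add_cancel] at h
  rw [h, hr.sum_cliqueCount_mul_pow hd, sub_add_cancel,
    ← sum_fiberwise_of_maps_to (g := fun v => #(G.earlierNeighborFinset r v)) (t := range d)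
      fun v _ => mem_range.2 (hd v)]
  refine sum_congr rfl fun t _ => ?_
  rw [sum_congr rfl fun v hv => by rw [(mem_filter.1 hv).2], sum_const, nsmul_eq_mul]

end IsPerfectEliminationOrder

end Connectivity

end SimpleGraph

theorem stmt0_general {V : Type} [Fintype V] [DecidableEq V] (G : SimpleGraph V)
    (hnc : G ≠ ⊤) (hch : IsChordal G)
    (d : ℕ)
    (hdmax : ∀ (m : ℕ) (s : Finset V), G.IsNClique m s → m ≤ d)
    (b : ℕ → ℤ)
    (hb : ∀ x : ℤ, ∑ i ∈ Finset.Icc 1 d, b i * (x + 1) ^ (i - 1) =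
      ∑ i ∈ Finset.Icc 1 d, (cliqueCount G i : ℤ) * x ^ (i - 1))
    (i : ℕ) (hi1 : 1 ≤ i) (hi2 : i ≤ vertexConnectivity G + 1) :
    b i = (∑ Y ∈ Finset.powersetCard (i - 1) (Finset.univ : Finset V),
      ((numComponents G Y : ℤ) - 1)) + 1 := by
  classical
  obtain ⟨r, hr⟩ :=
    SimpleGraph.exists_isPerfectEliminationOrder fun _ hT => hch.exists_isSimplicialIn hT
  obtain ⟨k, rfl⟩ : ∃ k, i = k + 1 := ⟨i - 1, by omega⟩
  have hkκ : k ≤ vertexConnectivity G := by omega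
  have hkn : k + 2 ≤ Fintype.card V := by have := SimpleGraph.vertexConnectivity_add_two_le hnc; omega
  obtain ⟨v, ⟨hv, -⟩, -⟩ := hr.existsUnique_card_earlierNeighborFinset_eq hkκ (by omega)
  have hkd : k < d := hv ▸ hdmax _ _ (hr.isNClique_insert_earlierNeighborFinset v)
  have hW : ∀ Y ∈ powersetCard k univ, (numComponents G Y : ℤ) - 1 =
      #{v | G.earlierNeighborFinset r v = Y ∧ ∃ u, r u < r v ∧ ¬ G.Adj v u} := fun Y hY => by
    have hYk := (mem_powersetCard.1 hY).2
    rw [hr.numComponents_eq_card_add_one (hYk ▸ hkκ)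
      (card_pos.1 (by rw [card_compl, hYk]; omega))]
    push_cast
    ring
  rw [hr.eq_card_of_sum_mul_add_one_pow_eq hdmax hb hkd, Nat.add_sub_cancel, sum_congr rfl hW,
    ← Nat.cast_sum, sum_powersetCard_card_filter_eq,
    hr.card_filter_card_earlierNeighborFinset_eq hkκ (by omega), Nat.cast_succ]

/-- For a non-complete chordal graph `G` with largest clique size `d`, vertex connectivity
`κ`, and `b`-vector `b`, one has
`b i = Σ_{|Y| = i-1} (W(G-Y) - 1) + 1` for every `1 ≤ i ≤ κ + 1`. -/
theorem stmt0 {V : Type} [Fintype V] [DecidableEq V] (G : SimpleGraph V)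
    (hnc : G ≠ ⊤) (hch : IsChordal G)
    (d : ℕ) (hd : ∃ s : Finset V, G.IsNClique d s)
    (hdmax : ∀ (m : ℕ) (s : Finset V), G.IsNClique m s → m ≤ d)
    (b : ℕ → ℤ)
    (hb : ∀ x : ℤ, ∑ i ∈ Finset.Icc 1 d, b i * (x + 1) ^ (i - 1) =
      ∑ i ∈ Finset.Icc 1 d, (cliqueCount G i : ℤ) * x ^ (i - 1))
    (i : ℕ) (hi1 : 1 ≤ i) (hi2 : i ≤ vertexConnectivity G + 1) :
    b i = (∑ Y ∈ Finset.powersetCard (i - 1) (Finset.univ : Finset V),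
      ((numComponents G Y : ℤ) - 1)) + 1 :=
  stmt0_general G hnc hch d hdmax b hb i hi1 hi2
end

section
/- Let G be a finite simple graph that is not complete, let G be chordal, and let d be the largest cardinality of a clique in G. Then b_i = d_i(G) for every i with κ̃(G) < i ≤ d. -/
open Finset

/-!
Every clique with more than `κ̃(G)` vertices lies in exactly one maximal clique. Hence, for
`κ̃(G) < i`, a minimum dominating `i`-clique picks one `i`-subset from each maximal clique of
order at least `i`, so `d_i(G)` is the number of such maximal cliques; and for `j ≥ i` the
`j`-cliques are counted by `c_j = ∑_T (|T| choose j)` over the same maximal cliques. Since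
`b_i` only depends on the `c_j` with `j ≥ i` (substitute `x - 1` for `x`), `b_i` is the sum
over those `T` of the `i`-th entry of the `b`-vector of the simplex on `T`, which is `1`.
-/

section

variable {V : Type*} [Fintype V] {G : SimpleGraph V}

theorem SimpleGraph.IsClique.exists_isMaxCliqueOf_superset {s : Finset V}
    (hs : G.IsClique (s : Set V)) : ∃ T, IsMaxCliqueOf G T ∧ s ⊆ T := by
  obtain ⟨T, hsT, hT⟩ := Finite.exists_le_maximal (p := fun t : Finset V ↦ G.IsClique ↑t) hs
  exact ⟨T, ⟨hT.prop, fun t ht hTt ↦ le_antisymm hTt (hT.2 ht hTt)⟩, hsT⟩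

open Classical in
noncomputable def largeMaxCliques (G : SimpleGraph V) (i : ℕ) : Finset (Finset V) :=
  {T | IsMaxCliqueOf G T ∧ i ≤ #T}

@[simp]
theorem mem_largeMaxCliques {i : ℕ} {T : Finset V} :
    T ∈ largeMaxCliques G i ↔ IsMaxCliqueOf G T ∧ i ≤ #T := by
  simp [largeMaxCliques]

variable [DecidableEq V]

theorem card_inter_le_kappaTilde {C C' : Finset V} (hC : IsMaxCliqueOf G C)
    (hC' : IsMaxCliqueOf G C') (hne : C ≠ C') : #(C ∩ C') ≤ kappaTilde G :=
  le_csSup ⟨Fintype.card V, by rintro _ ⟨_, _, -, -, -, rfl⟩; exact card_le_univ _⟩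
    ⟨C, C', hC, hC', hne, rfl⟩

theorem IsMaxCliqueOf.eq_of_kappaTilde_lt_card {s T T' : Finset V} (hT : IsMaxCliqueOf G T)
    (hT' : IsMaxCliqueOf G T') (hs : kappaTilde G < #s) (hsT : s ⊆ T) (hsT' : s ⊆ T') :
    T = T' := by
  by_contra hne
  have := (card_le_card (subset_inter hsT hsT')).trans (card_inter_le_kappaTilde hT hT' hne)
  omega

theorem exists_isDominatingCliqueSet_card_le (G : SimpleGraph V) (i : ℕ) :
    ∃ D, IsDominatingCliqueSet G i D ∧ #D ≤ #(largeMaxCliques G i) := by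
  have hsub (T : largeMaxCliques G i) : ∃ s ⊆ T.1, #s = i :=
    exists_subset_card_eq (mem_largeMaxCliques.mp T.2).2
  choose f hfT hfcard using hsub
  refine ⟨univ.image f, ⟨?_, fun T hT hiT ↦ ?_⟩, card_image_le.trans_eq (card_univ.trans ?_)⟩
  · simp only [mem_image, mem_univ, true_and, forall_exists_index, forall_apply_eq_imp_iff]
    exact fun T ↦ ⟨(mem_largeMaxCliques.mp T.2).1.1.subset (by exact_mod_cast hfT T), hfcard T⟩
  · exact ⟨f ⟨T, mem_largeMaxCliques.mpr ⟨hT, hiT⟩⟩, mem_image_of_mem _ (mem_univ _), hfT _⟩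
  · exact Fintype.card_coe _

theorem card_largeMaxCliques_le_of_isDominatingCliqueSet {i : ℕ} (hi : kappaTilde G < i)
    {D : Finset (Finset V)} (hD : IsDominatingCliqueSet G i D) :
    #(largeMaxCliques G i) ≤ #D := by
  refine card_le_card_of_forall_subsingleton (fun T s ↦ s ⊆ T) (fun T hT ↦ ?_) ?_
  · rw [mem_largeMaxCliques] at hT
    exact hD.2 T hT.1 hT.2
  · rintro s hs T ⟨hT, hsT⟩ T' ⟨hT', hsT'⟩
    rw [mem_largeMaxCliques] at hT hT'
    exact hT.1.eq_of_kappaTilde_lt_card hT'.1 (by rw [(hD.1 s hs).2]; exact hi) hsT hsT'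

theorem domNum_eq_card_largeMaxCliques {i : ℕ} (hi : kappaTilde G < i) :
    domNum G i = #(largeMaxCliques G i) := by
  obtain ⟨D, hD, hDcard⟩ := exists_isDominatingCliqueSet_card_le G i
  have hne : {k | ∃ D, IsDominatingCliqueSet G i D ∧ #D = k}.Nonempty := ⟨#D, D, hD, rfl⟩
  refine le_antisymm (le_trans (Nat.sInf_le ⟨D, hD, rfl⟩) hDcard) ?_
  obtain ⟨D', hD', hD'card⟩ := Nat.sInf_mem hne
  rw [domNum, ← hD'card]
  exact card_largeMaxCliques_le_of_isDominatingCliqueSet hi hD'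

theorem cliqueCount_eq_sum_choose {i j : ℕ} (hi : kappaTilde G < i) (hij : i ≤ j) :
    cliqueCount G j = ∑ T ∈ largeMaxCliques G i, (#T).choose j := by
  have hcliques : {s : Finset V | G.IsNClique j s} =
      ↑((largeMaxCliques G i).biUnion (powersetCard j)) := by
    ext s
    rw [mem_coe, mem_biUnion]
    simp only [mem_largeMaxCliques, mem_powersetCard]
    constructor
    · rintro ⟨hs, rfl⟩
      obtain ⟨T, hT, hsT⟩ := hs.exists_isMaxCliqueOf_superset
      exact ⟨T, ⟨hT, hij.trans (card_le_card hsT)⟩, hsT, rfl⟩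
    · rintro ⟨T, ⟨hT, -⟩, hsT, rfl⟩
      exact ⟨hT.1.subset (by exact_mod_cast hsT), rfl⟩
  rw [cliqueCount, hcliques, Set.ncard_coe_finset, card_biUnion]
  · simp only [card_powersetCard]
  · intro T hT T' hT' hne
    refine disjoint_left.mpr fun s hs hs' ↦ hne ?_
    rw [mem_powersetCard] at hs hs'
    rw [mem_coe, mem_largeMaxCliques] at hT hT'
    exact hT.1.eq_of_kappaTilde_lt_card hT'.1 (by omega) hs.1 hs'.1

end

open Polynomial

section

variable {R : Type*} [CommRing R]

theorem sum_choose_mul_X_pow_eq_geom_sum {t d : ℕ} (htd : t ≤ d) :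
    ∑ j ∈ Icc 1 d, C (t.choose j : R) * X ^ (j - 1) = ∑ k ∈ range t, (X + 1 : R[X]) ^ k := by
  refine isRegular_X.right.eq_iff.mp ?_
  refine add_right_cancel (b := 1)
    ((?_ : _ = (X + 1 : R[X]) ^ t).trans (geom_sum_mul_add X t).symm)
  have hshift (j : ℕ) (hj : j ∈ Icc 1 d) :
      C (t.choose j : R) * X ^ (j - 1) * X = X ^ j * (t.choose j : R[X]) := by
    rw [mul_assoc, pow_sub_one_mul (by simp at hj; omega), mul_comm, C_eq_natCast]
  rw [sum_mul, sum_congr rfl hshift, add_pow]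
  simp only [one_pow, mul_one]
  rw [sum_subset (range_subset_range.mpr (Nat.succ_le_succ htd)) fun j _ hj ↦ by
      rw [Nat.choose_eq_zero_of_lt (by simpa using hj), Nat.cast_zero, mul_zero],
    range_eq_Ico, sum_eq_sum_Ico_succ_bot (Nat.succ_pos d)]
  simp only [pow_zero, Nat.choose_zero_right, Nat.cast_one, mul_one, add_comm]
  rfl

theorem coeff_X_sub_one_pow_of_lt {m n : ℕ} (h : m < n) : ((X - 1 : R[X]) ^ m).coeff n = 0 := by
  rw [← C_1]
  exact coeff_eq_zero_of_natDegree_lt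
    ((natDegree_pow_le_of_le m (natDegree_X_sub_C_le 1)).trans_lt (by omega))

theorem sum_choose_mul_coeff_X_sub_one_pow {i t d : ℕ} (hi : 1 ≤ i) (hit : i ≤ t) (htd : t ≤ d) :
    ∑ j ∈ Icc 1 d, (t.choose j : R) * ((X - 1 : R[X]) ^ (j - 1)).coeff (i - 1) = 1 := by
  have := congrArg (fun p ↦ (aeval (X - 1 : R[X]) p).coeff (i - 1))
    (sum_choose_mul_X_pow_eq_geom_sum (R := R) htd)
  simpa [finsetSum_coeff, coeff_X_pow, show i - 1 < t by omega] using this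

variable [IsDomain R] [Infinite R]

theorem eq_sum_mul_coeff_X_sub_one_pow {d : ℕ} {b c : ℕ → R}
    (h : ∀ x : R, ∑ k ∈ Icc 1 d, b k * (x + 1) ^ (k - 1) = ∑ k ∈ Icc 1 d, c k * x ^ (k - 1))
    {i : ℕ} (hi : i ∈ Icc 1 d) :
    b i = ∑ j ∈ Icc 1 d, c j * ((X - 1 : R[X]) ^ (j - 1)).coeff (i - 1) := by
  have hpoly : ∑ k ∈ Icc 1 d, C (b k) * (X + 1) ^ (k - 1) =
      ∑ k ∈ Icc 1 d, C (c k) * X ^ (k - 1) :=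
    Polynomial.funext fun x ↦ by simpa [eval_finsetSum] using h x
  have := congrArg (fun p ↦ (aeval (X - 1 : R[X]) p).coeff (i - 1)) hpoly
  simp only [map_sum, map_mul, aeval_C, algebraMap_eq, map_pow, map_add, aeval_X, map_one,
    sub_add_cancel, finsetSum_coeff, coeff_C_mul, coeff_X_pow, mul_ite, mul_one, mul_zero] at this
  rw [← this, sum_eq_single_of_mem i hi fun j hj _ ↦ if_neg (by simp at hi hj; omega), if_pos rfl]

end

theorem stmt3_general {V : Type} [Fintype V] [DecidableEq V] (G : SimpleGraph V)
    (d : ℕ)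
    (hdmax : ∀ (m : ℕ) (s : Finset V), G.IsNClique m s → m ≤ d)
    (b : ℕ → ℤ)
    (hb : ∀ x : ℤ, ∑ i ∈ Finset.Icc 1 d, b i * (x + 1) ^ (i - 1) =
      ∑ i ∈ Finset.Icc 1 d, (cliqueCount G i : ℤ) * x ^ (i - 1))
    (i : ℕ) (hi1 : kappaTilde G < i) (hi2 : i ≤ d) :
    b i = (domNum G i : ℤ) := by
  rw [eq_sum_mul_coeff_X_sub_one_pow hb (mem_Icc.mpr ⟨by omega, hi2⟩),
    domNum_eq_card_largeMaxCliques hi1]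
  set a : ℕ → ℤ := fun j ↦ ((X - 1 : ℤ[X]) ^ (j - 1)).coeff (i - 1)
  have hcount (j : ℕ) (hj : j ∈ Icc 1 d) :
      cliqueCount G j * a j = ∑ T ∈ largeMaxCliques G i, ((#T).choose j : ℤ) * a j := by
    rcases lt_or_ge j i with hji | hij
    · simp [a, coeff_X_sub_one_pow_of_lt (show j - 1 < i - 1 by simp at hj; omega)]
    · rw [cliqueCount_eq_sum_choose hi1 hij, Nat.cast_sum, sum_mul]
  have hclique (T : Finset V) (hT : T ∈ largeMaxCliques G i) :
      ∑ j ∈ Icc 1 d, ((#T).choose j : ℤ) * a j = 1 := by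
    obtain ⟨hTmax, hiT⟩ := mem_largeMaxCliques.mp hT
    exact sum_choose_mul_coeff_X_sub_one_pow (by omega) hiT (hdmax _ T ⟨hTmax.1, rfl⟩)
  rw [sum_congr rfl hcount, sum_comm, sum_congr rfl hclique, sum_const, nsmul_one]

/-- For a non-complete chordal graph `G` with largest clique size `d` and `b`-vector `b`,
one has `b i = d_i(G)` for every `i` with `κ̃(G) < i ≤ d`. -/
theorem stmt3 {V : Type} [Fintype V] [DecidableEq V] (G : SimpleGraph V)
    (hnc : G ≠ ⊤) (hch : IsChordal G)
    (d : ℕ) (hd : ∃ s : Finset V, G.IsNClique d s)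
    (hdmax : ∀ (m : ℕ) (s : Finset V), G.IsNClique m s → m ≤ d)
    (b : ℕ → ℤ)
    (hb : ∀ x : ℤ, ∑ i ∈ Finset.Icc 1 d, b i * (x + 1) ^ (i - 1) =
      ∑ i ∈ Finset.Icc 1 d, (cliqueCount G i : ℤ) * x ^ (i - 1))
    (i : ℕ) (hi1 : kappaTilde G < i) (hi2 : i ≤ d) :
    b i = (domNum G i : ℤ) :=
  stmt3_general G d hdmax b hb i hi1 hi2
end

section
/- Let T be a threshold graph and let Y be any vertex-cut of T. Then the graph T−Y obtained by deleting the vertices of Y has at most one connected component with at least 2 vertices. -/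
open Finset

lemma thresh_subset {V : Type} [DecidableEq V] (G : SimpleGraph V) {s : Finset V}
    (h : IsThresholdOn G s) : ∀ t : Finset V, t ⊆ s → t.Nonempty → IsThresholdOn G t := by
  induction h with
  | single v =>
    intro t hts hne
    rcases Finset.subset_singleton_iff.mp hts with rfl | rfl
    · exact absurd hne (by simp)
    · exact .single v
  | isolated s v hv hs hiso ih =>
    intro t hts hne
    by_cases hvt : v ∈ t
    · have ht's : t.erase v ⊆ s := by
        intro x hx
        have hx1 := Finset.mem_of_mem_erase hx
        have hx2 := Finset.ne_of_mem_erase hx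
        have := hts hx1
        simp only [Finset.mem_insert] at this
        tauto
      by_cases h0 : (t.erase v).Nonempty
      · have hrec := ih _ ht's h0
        have heq : t = insert v (t.erase v) := (Finset.insert_erase hvt).symm
        rw [heq]
        exact .isolated _ v (Finset.notMem_erase _ _) hrec (fun u hu => hiso u (ht's hu))
      · have : t.erase v = ∅ := Finset.not_nonempty_iff_eq_empty.mp h0
        have : t = {v} := by
          apply Finset.eq_singleton_iff_unique_mem.mpr
          refine ⟨hvt, fun x hx => ?_⟩
          by_contra hne'
          exact h0 ⟨x, Finset.mem_erase.mpr ⟨hne', hx⟩⟩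
        rw [this]; exact .single v
    · refine ih _ ?_ hne
      intro x hx
      have := hts hx
      simp only [Finset.mem_insert] at this
      rcases this with rfl | h'
      · exact absurd hx hvt
      · exact h'
  | dominating s v hv hs hdom ih =>
    intro t hts hne
    by_cases hvt : v ∈ t
    · have ht's : t.erase v ⊆ s := by
        intro x hx
        have hx1 := Finset.mem_of_mem_erase hx
        have hx2 := Finset.ne_of_mem_erase hx
        have := hts hx1
        simp only [Finset.mem_insert] at this
        tauto
      by_cases h0 : (t.erase v).Nonempty
      · have hrec := ih _ ht's h0
        have heq : t = insert v (t.erase v) := (Finset.insert_erase hvt).symm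
        rw [heq]
        exact .dominating _ v (Finset.notMem_erase _ _) hrec (fun u hu => hdom u (ht's hu))
      · have : t = {v} := by
          apply Finset.eq_singleton_iff_unique_mem.mpr
          refine ⟨hvt, fun x hx => ?_⟩
          by_contra hne'
          exact h0 ⟨x, Finset.mem_erase.mpr ⟨hne', hx⟩⟩
        rw [this]; exact .single v
    · refine ih _ ?_ hne
      intro x hx
      have := hts hx
      simp only [Finset.mem_insert] at this
      rcases this with rfl | h'
      · exact absurd hx hvt
      · exact h'

lemma thresh_reach {V : Type} [DecidableEq V] (G : SimpleGraph V) {s : Finset V}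
    (h : IsThresholdOn G s) :
    ∀ (a b a' b' : (↑s : Set V)), (G.induce (↑s : Set V)).Adj a b →
      (G.induce (↑s : Set V)).Adj a' b' → (G.induce (↑s : Set V)).Reachable a a' := by
  induction h with
  | single v =>
    intro a b a' b' hab _
    exfalso
    have ha : (a : V) = v := by have := a.2; simpa using this
    have hb : (b : V) = v := by have := b.2; simpa using this
    exact hab.ne (Subtype.ext (ha.trans hb.symm))
  | isolated s v hv hs hiso ih =>
    intro a b a' b' hab ha'b'
    have hmem : ∀ (x y : (↑(insert v s) : Set V)),
        (G.induce (↑(insert v s) : Set V)).Adj x y → (x : V) ∈ s := by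
      intro x y hxy
      have hx : (x : V) = v ∨ (x : V) ∈ s := by have := x.2; simpa using this
      have hy : (y : V) = v ∨ (y : V) ∈ s := by have := y.2; simpa using this
      have hadj : G.Adj (x : V) (y : V) := hxy
      rcases hx with hx | hx
      · rcases hy with hy | hy
        · rw [hx, hy] at hadj; exact absurd hadj (G.irrefl)
        · rw [hx] at hadj; exact absurd hadj (hiso _ hy)
      · exact hx
    have hsub : (↑s : Set V) ⊆ (↑(insert v s) : Set V) := by
      simp [Set.subset_def, Finset.mem_insert]; tauto
    set a₀ : (↑s : Set V) := ⟨a, hmem a b hab⟩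
    set b₀ : (↑s : Set V) := ⟨b, hmem b a hab.symm⟩
    set a₁ : (↑s : Set V) := ⟨a', hmem a' b' ha'b'⟩
    set b₁ : (↑s : Set V) := ⟨b', hmem b' a' ha'b'.symm⟩
    have hr : (G.induce (↑s : Set V)).Reachable a₀ a₁ :=
      ih a₀ b₀ a₁ b₁ hab ha'b'
    have := hr.map (G.induceHomOfLE hsub).toHom
    have he : ((G.induceHomOfLE hsub) a₀ : V) = (a : V) := rfl
    have he' : ((G.induceHomOfLE hsub) a₁ : V) = (a' : V) := rfl
    convert this using 2 <;> exact Subtype.ext (by simp [he, he'])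
  | dominating s v hv hs hdom ih =>
    intro a b a' b' hab ha'b'
    have hvmem : (v : V) ∈ (↑(insert v s) : Set V) := by simp
    have hreach : ∀ x : (↑(insert v s) : Set V),
        (G.induce (↑(insert v s) : Set V)).Reachable x ⟨v, hvmem⟩ := by
      intro x
      have hx : (x : V) = v ∨ (x : V) ∈ s := by have := x.2; simpa using this
      rcases hx with hx | hx
      · exact SimpleGraph.Reachable.refl _ |>.mono le_rfl |>.mono le_rfl |>.trans
          (by rw [show x = (⟨v, hvmem⟩ : (↑(insert v s) : Set V)) from Subtype.ext hx])
      · have : (G.induce (↑(insert v s) : Set V)).Adj x ⟨v, hvmem⟩ :=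
          ((hdom _ hx).symm : G.Adj (x : V) v)
        exact this.reachable
    exact (hreach a).trans (hreach a').symm

/-- For any vertex-cut `Y` of a threshold graph `T`, the graph `T - Y` has at most one
connected component with at least `2` vertices. -/
theorem stmt15 {V : Type} [Fintype V] [DecidableEq V] (T : SimpleGraph V)
    (hth : IsThreshold T) (Y : Finset V) (hY : IsVertexCut T Y) :
    ∀ c c' : (T.induce (↑(Yᶜ) : Set V)).ConnectedComponent,
      2 ≤ c.supp.ncard → 2 ≤ c'.supp.ncard → c = c' := by
  intro c c' hc hc'
  have hwit : ∀ d : (T.induce (↑(Yᶜ) : Set V)).ConnectedComponent, 2 ≤ d.supp.ncard →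
      ∃ a b : (↑(Yᶜ) : Set V), (T.induce (↑(Yᶜ) : Set V)).Adj a b ∧
        (T.induce (↑(Yᶜ) : Set V)).connectedComponentMk a = d := by
    intro d hd
    have hfin : d.supp.Finite := Set.toFinite _
    obtain ⟨x, y, hx, hy, hxy⟩ := (Set.one_lt_ncard_iff hfin).mp (by omega)
    have hr : (T.induce (↑(Yᶜ) : Set V)).Reachable x y :=
      SimpleGraph.ConnectedComponent.exact (hx.trans hy.symm)
    obtain ⟨w⟩ := hr
    cases w with
    | nil => exact absurd rfl hxy
    | cons hadj p => exact ⟨x, _, hadj, hx⟩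
  obtain ⟨a, b, hab, ha⟩ := hwit c hc
  obtain ⟨a', b', ha'b', ha'⟩ := hwit c' hc'
  have hne : (Yᶜ : Finset V).Nonempty := ⟨a, a.2⟩
  have hth' : IsThresholdOn T Yᶜ := thresh_subset T hth _ (Finset.subset_univ _) hne
  have hr := thresh_reach T hth' a b a' b' hab ha'b'
  rw [← ha, ← ha']
  exact SimpleGraph.ConnectedComponent.sound hr
end

section
/- Let G be a finite simple chordal graph such that its clique complex Δ(G) is a matroid complex, i.e., for every subset S of V(G) the subcomplex of Δ(G) induced on V(G)∖S is pure. Then G is a threshold graph. -/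
open Finset

/-!
Purity of the clique complex on a three-vertex set `{a, b, c}` with `a ~ b` and `c ≁ a, b`
fails (the facets `{a, b}` and `{c}` have different sizes), so non-adjacency between distinct
vertices is transitive. Hence if two adjacent vertices `a, b` had non-neighbours `u, u'`,
transitivity would force `b ~ u`, `a ~ u'` and `u ~ u'`, giving an induced 4-cycle
`a b u u'`, which chordality forbids. So the vertices that are not universal form an
independent set; in every induced subgraph some vertex is therefore isolated or dominating,
and peeling such vertices off builds `G` as a threshold graph.
-/

section Threshold

variable {V : Type*} {G : SimpleGraph V}

lemma IsChordal.false_of_induced_cycle4 (hch : IsChordal G) {a b c d : V}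
    (hab : G.Adj a b) (hbc : G.Adj b c) (hcd : G.Adj c d) (hda : G.Adj d a)
    (hac : a ≠ c) (hbd : b ≠ d) (nac : ¬ G.Adj a c) (nbd : ¬ G.Adj b d) : False := by
  obtain ⟨i, j, hij, hij1, hji1, hchord⟩ := hch 4 le_rfl ![a, b, c, d]
    (by
      intro i j h
      fin_cases i <;> fin_cases j <;> first
        | rfl
        | (simp at h; subst h; simp_all))
    (by intro i; fin_cases i <;> first | exact hab | exact hbc | exact hcd | exact hda)
  fin_cases i <;> fin_cases j <;> first
    | exact hij rfl | exact hij1 rfl | exact hji1 rfl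
    | exact nac hchord | exact nac hchord.symm | exact nbd hchord | exact nbd hchord.symm

lemma isMaxCliqueWithin_of_forall_exists_not_adj {W s : Finset V} (hsW : s ⊆ W)
    (hs : G.IsClique (s : Set V)) (hW : ∀ w ∈ W, w ∉ s → ∃ x ∈ s, ¬ G.Adj w x) :
    IsMaxCliqueWithin G W s := by
  refine ⟨hsW, hs, fun t htW ht hst => hst.antisymm fun w hwt => ?_⟩
  by_contra hws
  obtain ⟨x, hxs, hwx⟩ := hW w (htW hwt) hws
  exact hwx (ht hwt (hst hxs) fun h => hws (h ▸ hxs))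

variable [DecidableEq V]

lemma adj_of_adj_of_not_adj (hmatroid : ∀ W : Finset V, PureOn G W) {a b c : V}
    (hab : G.Adj a b) (nac : ¬ G.Adj a c) (hac : a ≠ c) (hbc : b ≠ c) : G.Adj b c := by
  by_contra nbc
  have hedge : IsMaxCliqueWithin G {a, b, c} {a, b} := by
    refine isMaxCliqueWithin_of_forall_exists_not_adj (by simp [insert_subset_iff])
      (by simpa using fun _ => hab) ?_
    intro w hw hwab
    obtain rfl : w = c := by simp_all
    exact ⟨a, by simp, fun h => nac h.symm⟩
  have hpoint : IsMaxCliqueWithin G {a, b, c} {c} := by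
    refine isMaxCliqueWithin_of_forall_exists_not_adj (by simp) (by simp) ?_
    intro w hw hwc
    obtain rfl | rfl : w = a ∨ w = b := by simp_all
    · exact ⟨c, by simp, nac⟩
    · exact ⟨c, by simp, nbc⟩
  have := hmatroid _ _ _ hedge hpoint
  rw [card_pair hab.ne, card_singleton] at this
  omega

lemma not_adj_of_not_adj_of_not_adj (hch : IsChordal G) (hmatroid : ∀ W : Finset V, PureOn G W)
    {a b u u' : V} (hau : a ≠ u) (nau : ¬ G.Adj a u)
    (hbu' : b ≠ u') (nbu' : ¬ G.Adj b u') : ¬ G.Adj a b := by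
  intro hadj
  have hbu : G.Adj b u :=
    adj_of_adj_of_not_adj hmatroid hadj nau hau fun h => nau (h ▸ hadj)
  have hau'_ne : a ≠ u' := fun h => nbu' (h ▸ hadj.symm)
  have hau' : G.Adj a u' :=
    adj_of_adj_of_not_adj hmatroid hadj.symm nbu' hbu' hau'_ne
  have huu' : G.Adj u' u :=
    adj_of_adj_of_not_adj hmatroid hau' nau hau fun h => nau (h ▸ hau')
  exact hch.false_of_induced_cycle4 hadj hbu huu'.symm hau'.symm hau hbu' nau nbu'

lemma isThresholdOn_of_forall_exists_dominating_or_isolated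
    (h : ∀ t : Finset V, t.Nontrivial →
      ∃ v ∈ t, (∀ u ∈ t.erase v, G.Adj v u) ∨ ∀ u ∈ t.erase v, ¬ G.Adj v u)
    {s : Finset V} (hs : s.Nonempty) : IsThresholdOn G s := by
  induction s using Finset.strongInduction with
  | H s ih =>
    obtain ⟨v, rfl⟩ | hnt := hs.exists_eq_singleton_or_nontrivial
    · exact .single v
    obtain ⟨v, hv, hdom | hiso⟩ := h s hnt
    all_goals
      rw [← insert_erase hv]
      have hrest := ih _ (erase_ssubset hv) hnt.erase_nonempty
    · exact .dominating _ v (notMem_erase v s) hrest hdom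
    · exact .isolated _ v (notMem_erase v s) hrest hiso

end Threshold

/-- If `G` is a chordal graph whose clique complex is a matroid complex (its restriction
to every subset of the vertex set is pure), then `G` is a threshold graph. -/
theorem stmt17 {V : Type} [Fintype V] [DecidableEq V] [Nonempty V] (G : SimpleGraph V)
    (hch : IsChordal G) (hmatroid : ∀ W : Finset V, PureOn G W) :
    IsThreshold G := by
  refine isThresholdOn_of_forall_exists_dominating_or_isolated (fun t ht => ?_) univ_nonempty
  by_cases hdom : ∃ v ∈ t, ∀ u ∈ t.erase v, G.Adj v u
  · obtain ⟨v, hv, hvdom⟩ := hdom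
    exact ⟨v, hv, .inl hvdom⟩
  push Not at hdom
  obtain ⟨v, hv⟩ := ht.nonempty
  refine ⟨v, hv, .inr fun u hu => ?_⟩
  obtain ⟨x, hx, nvx⟩ := hdom v hv
  obtain ⟨y, hy, nuy⟩ := hdom u (mem_of_mem_erase hu)
  exact not_adj_of_not_adj_of_not_adj hch hmatroid (ne_of_mem_erase hx).symm nvx
    (ne_of_mem_erase hy).symm nuy
end
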